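/- (Substitution Lemma for λ-terms.) Let Λ be the set of λ-terms in de Bruijn style: the inductive type generated by variables x_i (i ∈ ℕ), application (a b) for a, b ∈ Λ, and abstraction (λ a) for a ∈ Λ. Define substitution Λ × (ℕ → Λ) → Λ recursively by: x_i[f] = f i; (a b)[f] = (a[f])(b[f]); (λ a)[f] = λ(a[x_1, (f 1)⁺, (f 2)⁺, …]), where t⁺ := t[x_2, x_3, x_4, …]. Then Λ is a clone over ℕ: for all a ∈ Λ and f, g : ℕ → Λ, (1) a[x] = a where x(i) = x_i, and (2) (a[f])[g] = a[f★g] where (f★g)(i) = (f i)[g]. -/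
import Mathlib


/-- λ-terms in de Bruijn style: variables `x_i` (`i` a positive integer),
application, and abstraction. -/
inductive Lam : Type where
  | var : ℕ+ → Lam
  | app : Lam → Lam → Lam
  | abs : Lam → Lam

namespace Lam

/-- Renaming of variables (auxiliary to define substitution). -/
def rename : Lam → (ℕ+ → ℕ+) → Lam
  | var i, r => var (r i)
  | app a b, r => app (a.rename r) (b.rename r)
  | abs a, r => abs (a.rename (fun j => if j = 1 then 1 else r (j - 1) + 1))

/-- Simultaneous substitution: `x_i[f] = f i`, `(a b)[f] = (a[f])(b[f])`,
`(λ a)[f] = λ(a[x_1, (f 1)⁺, (f 2)⁺, …])` where `t⁺ = t[x_2,x_3,…]`. -/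
def subst : Lam → (ℕ+ → Lam) → Lam
  | var i, f => f i
  | app a b, f => app (a.subst f) (b.subst f)
  | abs a, f =>
      abs (a.subst (fun j => if j = 1 then var 1 else (f (j - 1)).rename (· + 1)))

end Lam


namespace Lam

private theorem pn_lt (k : ℕ+) : (1:ℕ+) < k + 1 := PNat.lt_add_left 1 k

private theorem pn_succ_ne_one (k : ℕ+) : k + 1 ≠ 1 := ne_of_gt (pn_lt k)

private theorem pn_add_sub (k : ℕ+) : (k+1) - 1 = k := by
  apply PNat.eq
  rw [PNat.sub_coe, if_pos (pn_lt k)]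
  simp

private theorem pn_sub_add (j : ℕ+) (h : j ≠ 1) : (j-1)+1 = j := by
  have h1 : 1 < j := lt_of_le_of_ne j.one_le (Ne.symm h)
  apply PNat.eq
  have := PNat.sub_coe j 1
  rw [if_pos h1] at this
  have hj : 1 ≤ (j:ℕ) := j.one_le
  simp [this]
  omega


private theorem subst_congr (a : Lam) {f g : ℕ+ → Lam} (h : ∀ i, f i = g i) :
    a.subst f = a.subst g := by rw [funext h]

private theorem rename_congr (a : Lam) {r s : ℕ+ → ℕ+} (h : ∀ i, r i = s i) :
    a.rename r = a.rename s := by rw [funext h]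

theorem rename_eq_subst (a : Lam) : ∀ r : ℕ+ → ℕ+,
    a.rename r = a.subst (fun i => var (r i)) := by
  induction a with
  | var i => intro r; simp [rename, subst]
  | app a b iha ihb => intro r; simp [rename, subst, iha, ihb]
  | abs a ih =>
    intro r
    simp only [rename, subst, ih]
    refine congrArg Lam.abs (subst_congr a fun j => ?_)
    by_cases h : j = 1 <;> simp [h, rename]

theorem rename_rename (a : Lam) : ∀ r s : ℕ+ → ℕ+,
    (a.rename r).rename s = a.rename (fun i => s (r i)) := by
  induction a with
  | var i => intro r s; simp [rename]
  | app a b iha ihb => intro r s; simp [rename, iha, ihb]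
  | abs a ih =>
    intro r s
    simp only [rename, ih]
    refine congrArg Lam.abs (rename_congr a fun j => ?_)
    by_cases h : j = 1
    · simp [h]
    · simp [h, pn_succ_ne_one, pn_add_sub]

theorem subst_rename (a : Lam) : ∀ (r : ℕ+ → ℕ+) (f : ℕ+ → Lam),
    (a.rename r).subst f = a.subst (fun i => f (r i)) := by
  induction a with
  | var i => intro r f; simp [rename, subst]
  | app a b iha ihb => intro r f; simp [rename, subst, iha, ihb]
  | abs a ih =>
    intro r f
    simp only [rename, subst, ih]
    refine congrArg Lam.abs (subst_congr a fun j => ?_)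
    by_cases h : j = 1
    · simp [h]
    · simp [h, pn_succ_ne_one, pn_add_sub]

theorem rename_subst (a : Lam) : ∀ (f : ℕ+ → Lam) (r : ℕ+ → ℕ+),
    (a.subst f).rename r = a.subst (fun i => (f i).rename r) := by
  induction a with
  | var i => intro f r; simp [subst]
  | app a b iha ihb => intro f r; simp [rename, subst, iha, ihb]
  | abs a ih =>
    intro f r
    simp only [rename, subst, ih]
    refine congrArg Lam.abs (subst_congr a fun j => ?_)
    by_cases h : j = 1
    · simp [h, rename]
    · simp only [h, if_neg h, if_false, rename_rename]
      exact rename_congr _ fun k => by simp [pn_succ_ne_one, pn_add_sub]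

theorem subst_subst (a : Lam) : ∀ f g : ℕ+ → Lam,
    (a.subst f).subst g = a.subst (fun i => (f i).subst g) := by
  induction a with
  | var i => intro f g; simp [subst]
  | app a b iha ihb => intro f g; simp [subst, iha, ihb]
  | abs a ih =>
    intro f g
    simp only [subst, ih]
    refine congrArg Lam.abs (subst_congr a fun j => ?_)
    by_cases h : j = 1
    · simp [h, subst]
    · simp only [h, if_neg h, if_false, subst_rename, rename_subst]
      exact subst_congr _ fun k => by simp [pn_succ_ne_one, pn_add_sub]

theorem subst_var (a : Lam) : a.subst (fun i => var i) = a := by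
  induction a with
  | var i => simp [subst]
  | app a b iha ihb => simp [subst, iha, ihb]
  | abs a ih =>
    simp only [subst]
    refine congrArg Lam.abs ?_
    rw [subst_congr a (g := fun j : ℕ+ => var j) fun j => ?_, ih]
    by_cases h : j = 1
    · simp [h]
    · simp [h, rename, pn_sub_add j h]

end Lam

/-- The set of λ-terms with the above substitution is a clone over ℕ: substitution
satisfies the stated recursive clauses (in particular the abstraction clause with
`t⁺ := t[x_2,x_3,…]` computed by substitution itself), the unit law `a[x] = a`, the
associativity law `(a[f])[g] = a[f★g]`, and the projection law `x_i[f] = f i`. -/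
theorem lambda_terms_form_a_clone :
    (∀ (i : ℕ+) (f : ℕ+ → Lam), (Lam.var i).subst f = f i) ∧
    (∀ (a b : Lam) (f : ℕ+ → Lam),
      (Lam.app a b).subst f = Lam.app (a.subst f) (b.subst f)) ∧
    (∀ (a : Lam) (f : ℕ+ → Lam),
      (Lam.abs a).subst f =
        Lam.abs (a.subst (fun j =>
          if j = 1 then Lam.var 1
          else (f (j - 1)).subst (fun k => Lam.var (k + 1))))) ∧
    (∀ a : Lam, a.subst (fun i => Lam.var i) = a) ∧
    (∀ (a : Lam) (f g : ℕ+ → Lam),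
      (a.subst f).subst g = a.subst (fun i => (f i).subst g)) := by
  refine ⟨fun i f => rfl, fun a b f => rfl, ?_, Lam.subst_var, Lam.subst_subst⟩
  intro a f
  simp only [Lam.subst]
  refine congrArg Lam.abs (Lam.subst_congr a fun j => ?_)
  by_cases h : j = 1
  · simp [h]
  · simp [h, Lam.rename_eq_subst]
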